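/- arXiv:2101.03892 — 2 statements merged into one kernel-verified Lean document; each statement's English description precedes it below -/
import Mathlib

section
/- Let 1 ≤ p < ∞, let φ be a non-negative increasing C¹ function on [a,b], and let 𝒜 be analytic on D(0,R) with R > (φ(b)−φ(a))^{Re(β)}. Then the generalised fractional integral ᴬIₐ^{α,β,φ} is a bounded operator from L^p_φ[a,b] to itself, with operator norm at most K = ((φ(b)−φ(a))^α / α) · sup_{|τ| < (φ(b)−φ(a))^β} |𝒜(τ)| (for real α > 0). -/
open MeasureTheory Set Filter
open scoped NNReal ENNReal Real Topology

section AuxLemmas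

lemma mono_deriv_nonneg {f : ℝ → ℝ} (hf : Monotone f) (x : ℝ) : 0 ≤ deriv f x := by
  by_cases hd : DifferentiableAt ℝ f x
  · have h := hd.hasDerivAt
    rw [hasDerivAt_iff_tendsto_slope] at h
    have h' : Tendsto (slope f x) (𝓝[>] x) (𝓝 (deriv f x)) :=
      h.mono_left (nhdsWithin_mono x (fun y hy => ne_of_gt hy))
    refine ge_of_tendsto h' ?_
    filter_upwards [self_mem_nhdsWithin] with y hy
    rw [slope_def_field]
    have hxy : x < y := hy
    exact div_nonneg (sub_nonneg.2 (hf hxy.le)) (sub_nonneg.2 hxy.le)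
  · rw [deriv_zero_of_not_differentiableAt hd]

lemma lintegral_image_eq_lintegral_abs_deriv_mul' {s : Set ℝ} {f f' : ℝ → ℝ}
    (hs : MeasurableSet s) (hf' : ∀ x ∈ s, HasDerivWithinAt f (f' x) s x)
    (hf : InjOn f s) (g : ℝ → ℝ≥0∞) :
    ∫⁻ x in f '' s, g x = ∫⁻ x in s, ENNReal.ofReal |f' x| * g (f x) := by
  simpa only [ContinuousLinearMap.det_toSpanSingleton] using
    MeasureTheory.lintegral_image_eq_lintegral_abs_det_fderiv_mul volume hs
      (fun x hx => (hf' x hx).hasFDerivWithinAt) hf g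

lemma lint_ker_left (Y X : ℝ) (h : Y ≤ X) {α : ℝ} (hα : 0 < α) :
    ∫⁻ y in Ioc Y X, ENNReal.ofReal ((X - y) ^ (α - 1)) =
      ENNReal.ofReal ((X - Y) ^ α / α) := by
  have hint : IntegrableOn (fun y : ℝ => (X - y) ^ (α - 1)) (Ioc Y X) := by
    have h1 : IntervalIntegrable (fun s : ℝ => s ^ (α - 1)) volume (X - Y) (X - X) :=
      intervalIntegral.intervalIntegrable_rpow' (by linarith)
    have h2 := h1.comp_sub_left X
    simp only [sub_sub_cancel, sub_self, sub_zero] at h2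
    rw [← intervalIntegrable_iff_integrableOn_Ioc_of_le h]
    exact h2
  rw [← MeasureTheory.ofReal_integral_eq_lintegral_ofReal hint ?_]
  · congr 1
    rw [← intervalIntegral.integral_of_le h,
      intervalIntegral.integral_comp_sub_left (fun s : ℝ => s ^ (α - 1)) X, sub_self,
      integral_rpow (Or.inl (by linarith))]
    rw [sub_add_cancel, Real.zero_rpow hα.ne', sub_zero]
  · filter_upwards [ae_restrict_mem measurableSet_Ioc] with y hy
    exact Real.rpow_nonneg (by linarith [hy.2]) _

lemma lint_ker_right (Y X : ℝ) (h : Y ≤ X) {α : ℝ} (hα : 0 < α) :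
    ∫⁻ y in Ioc Y X, ENNReal.ofReal ((y - Y) ^ (α - 1)) =
      ENNReal.ofReal ((X - Y) ^ α / α) := by
  have hint : IntegrableOn (fun y : ℝ => (y - Y) ^ (α - 1)) (Ioc Y X) := by
    have h1 : IntervalIntegrable (fun s : ℝ => s ^ (α - 1)) volume (Y - Y) (X - Y) :=
      intervalIntegral.intervalIntegrable_rpow' (by linarith)
    have h2 := h1.comp_sub_right Y
    simp only [sub_add_cancel] at h2
    rw [← intervalIntegrable_iff_integrableOn_Ioc_of_le h]
    exact h2
  rw [← MeasureTheory.ofReal_integral_eq_lintegral_ofReal hint ?_]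
  · congr 1
    rw [← intervalIntegral.integral_of_le h,
      intervalIntegral.integral_comp_sub_right (fun s : ℝ => s ^ (α - 1)) Y, sub_self,
      integral_rpow (Or.inl (by linarith))]
    rw [sub_add_cancel, Real.zero_rpow hα.ne', sub_zero]
  · filter_upwards [ae_restrict_mem measurableSet_Ioc] with y hy
    exact Real.rpow_nonneg (by linarith [hy.1]) _

lemma lint_subst {φ : ℝ → ℝ} (hφ : ContDiff ℝ 1 φ) (hmono : StrictMono φ)
    (hd : ∀ x, 0 ≤ deriv φ x) (c d : ℝ) (hcd : c ≤ d) (g : ℝ → ℝ≥0∞) :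
    ∫⁻ s in Ioc c d, ENNReal.ofReal (deriv φ s) * g (φ s) =
      ∫⁻ y in Ioc (φ c) (φ d), g y := by
  have himg : φ '' Ioc c d = Ioc (φ c) (φ d) := by
    apply Subset.antisymm
    · rintro _ ⟨s, hs, rfl⟩; exact ⟨hmono hs.1, hmono.monotone hs.2⟩
    · exact intermediate_value_Ioc hcd hφ.continuous.continuousOn
  calc ∫⁻ s in Ioc c d, ENNReal.ofReal (deriv φ s) * g (φ s)
      = ∫⁻ s in Ioc c d, ENNReal.ofReal |deriv φ s| * g (φ s) := by
        apply lintegral_congr; intro s; rw [abs_of_nonneg (hd s)]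
    _ = ∫⁻ y in φ '' Ioc c d, g y :=
        (lintegral_image_eq_lintegral_abs_deriv_mul' measurableSet_Ioc
          (fun x _ => ((hφ.differentiable one_ne_zero).differentiableAt.hasDerivAt).hasDerivWithinAt)
          (hmono.injective.injOn) g).symm
    _ = ∫⁻ y in Ioc (φ c) (φ d), g y := by rw [himg]

lemma lint_C1 {φ : ℝ → ℝ} (hφ : ContDiff ℝ 1 φ) (hmono : StrictMono φ)
    (hd : ∀ x, 0 ≤ deriv φ x) {α : ℝ} (hα : 0 < α) {a b x : ℝ} (hax : a ≤ x) (hxb : x ≤ b) :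
    ∫⁻ t in Ioc a x, ENNReal.ofReal (deriv φ t) * ENNReal.ofReal ((φ x - φ t) ^ (α - 1))
      ≤ ENNReal.ofReal ((φ b - φ a) ^ α / α) := by
  rw [lint_subst hφ hmono hd a x hax (fun y => ENNReal.ofReal ((φ x - y) ^ (α - 1))),
    lint_ker_left (φ a) (φ x) (hmono.monotone hax) hα]
  apply ENNReal.ofReal_le_ofReal
  gcongr
  · exact sub_nonneg.2 (hmono.monotone hax)
  · exact hmono.monotone hxb

lemma lint_C2 {φ : ℝ → ℝ} (hφ : ContDiff ℝ 1 φ) (hmono : StrictMono φ)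
    (hd : ∀ x, 0 ≤ deriv φ x) {α : ℝ} (hα : 0 < α) {a b t : ℝ} (hat : a ≤ t) (htb : t ≤ b) :
    ∫⁻ x in Ioc t b, ENNReal.ofReal (deriv φ x) * ENNReal.ofReal ((φ x - φ t) ^ (α - 1))
      ≤ ENNReal.ofReal ((φ b - φ a) ^ α / α) := by
  rw [lint_subst hφ hmono hd t b htb (fun y => ENNReal.ofReal ((y - φ t) ^ (α - 1))),
    lint_ker_right (φ t) (φ b) (hmono.monotone htb) hα]
  apply ENNReal.ofReal_le_ofReal
  gcongr
  · exact sub_nonneg.2 (hmono.monotone htb)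
  · exact hmono.monotone hat

end AuxLemmas

/-- Riemann--Liouville fractional integral of order `α` with respect to `φ`,
with lower limit `a`.  Taking `φ = id` recovers the classical RL integral. -/
noncomputable def RLIphi (a : ℝ) (α : ℂ) (φ : ℝ → ℝ) (u : ℝ → ℂ) (x : ℝ) : ℂ :=
  (Complex.Gamma α)⁻¹ *
    ∫ t in a..x, ((deriv φ t : ℝ) : ℂ) * (((φ x - φ t : ℝ)) : ℂ) ^ (α - 1) * u t

/-- Generalised fractional integral with analytic kernel `A` with respect to `φ`. -/
noncomputable def AIphi (a : ℝ) (α β : ℂ) (A : ℂ → ℂ) (φ : ℝ → ℝ) (u : ℝ → ℂ) (x : ℝ) : ℂ :=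
  ∫ t in a..x, ((deriv φ t : ℝ) : ℂ) * (((φ x - φ t : ℝ)) : ℂ) ^ (α - 1) *
    A ((((φ x - φ t : ℝ)) : ℂ) ^ β) * u t

/-- The derivative operator `(1/φ'(x)) d/dx` (derivative with respect to `φ`). -/
noncomputable def Dphi (φ : ℝ → ℝ) (u : ℝ → ℂ) : ℝ → ℂ :=
  fun x => ((deriv φ x : ℝ) : ℂ)⁻¹ * deriv u x

/-- Riemann--Liouville differintegral of order `α` with respect to `φ`:
a derivative when `Re α ≥ 0`, a fractional integral of order `-α` otherwise. -/
noncomputable def RLDphi (a : ℝ) (α : ℂ) (φ : ℝ → ℝ) (u : ℝ → ℂ) : ℝ → ℂ :=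
  if 0 ≤ α.re then
    (Dphi φ)^[⌊α.re⌋₊ + 1] (RLIphi a (((⌊α.re⌋₊ : ℕ) : ℂ) + 1 - α) φ u)
  else RLIphi a (-α) φ u

/-- Generalised Laplace transform with respect to `φ`. -/
noncomputable def Lphi (φ : ℝ → ℝ) (u : ℝ → ℂ) (s : ℂ) : ℂ :=
  ∫ x in Ioi (0 : ℝ), Complex.exp (-s * (φ x : ℂ)) * ((deriv φ x : ℝ) : ℂ) * u x

/-- The generalised fractional integral is a bounded operator on the weighted
space `L^p_φ[a,b]`, with explicit bound `K`. -/
theorem generalised_integral_Lp_bound (a b : ℝ) (hab : a < b) (p : ℝ) (hp : 1 ≤ p)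
    (φ : ℝ → ℝ) (hφ : ContDiff ℝ 1 φ) (hmono : StrictMono φ)
    (hnn : ∀ x, 0 ≤ φ x)
    (α β : ℝ) (hα : 0 < α) (hβ : 0 < β)
    (R : ℝ) (hR : (φ b - φ a) ^ β < R)
    (A : ℂ → ℂ) (hA : AnalyticOn ℂ A (Metric.ball 0 R))
    (u : ℝ → ℂ) (hu : IntegrableOn (fun x => ‖u x‖ ^ p * deriv φ x) (Icc a b)) :
    (∫ x in a..b, ‖AIphi a (α : ℂ) (β : ℂ) A φ u x‖ ^ p * deriv φ x) ^ (1 / p) ≤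
      (((φ b - φ a) ^ α / α) *
          ⨆ τ : Metric.ball (0 : ℂ) ((φ b - φ a) ^ β), ‖A τ‖) *
        (∫ x in a..b, ‖u x‖ ^ p * deriv φ x) ^ (1 / p) := by
  have hp0 : 0 < p := lt_of_lt_of_le one_pos hp
  have hd : ∀ x, 0 ≤ deriv φ x := mono_deriv_nonneg hmono.monotone
  have hΦ : 0 < φ b - φ a := sub_pos.2 (hmono hab)
  set M : ℝ := ⨆ τ : Metric.ball (0 : ℂ) ((φ b - φ a) ^ β), ‖A τ‖ with hMdef
  have hrad : 0 < (φ b - φ a) ^ β := Real.rpow_pos_of_pos hΦ β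
  obtain ⟨M₀, hM₀⟩ := (isCompact_closedBall (0:ℂ) ((φ b - φ a) ^ β)).exists_bound_of_continuousOn
      (hA.continuousOn.mono (Metric.closedBall_subset_ball hR))
  have hbdd : BddAbove (Set.range fun τ : Metric.ball (0:ℂ) ((φ b - φ a) ^ β) => ‖A τ‖) := by
    refine ⟨M₀, ?_⟩
    rintro _ ⟨τ, rfl⟩
    exact hM₀ τ (Metric.ball_subset_closedBall τ.2)
  have hMle : ∀ τ : ℂ, τ ∈ Metric.ball (0:ℂ) ((φ b - φ a) ^ β) → ‖A τ‖ ≤ M :=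
    fun τ hτ => le_ciSup hbdd (⟨τ, hτ⟩ : Metric.ball (0:ℂ) ((φ b - φ a) ^ β))
  have hM0 : 0 ≤ M := le_trans (norm_nonneg _) (hMle 0 (Metric.mem_ball_self hrad))
  have hC0 : 0 ≤ (φ b - φ a) ^ α / α := div_nonneg (Real.rpow_nonneg hΦ.le _) hα.le
  rw [intervalIntegral.integral_of_le hab.le, intervalIntegral.integral_of_le hab.le]
  have hRHS0 : 0 ≤ ((φ b - φ a) ^ α / α * M) *
      (∫ x in Ioc a b, ‖u x‖ ^ p * deriv φ x) ^ (1/p) := by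
    apply mul_nonneg (mul_nonneg hC0 hM0)
    apply Real.rpow_nonneg
    apply setIntegral_nonneg measurableSet_Ioc
    exact fun x _ => mul_nonneg (Real.rpow_nonneg (norm_nonneg _) _) (hd x)
  by_cases hInt : IntegrableOn
      (fun x => ‖AIphi a (α:ℂ) (β:ℂ) A φ u x‖ ^ p * deriv φ x) (Ioc a b) volume
  swap
  · rw [MeasureTheory.integral_undef hInt, Real.zero_rpow (one_div_ne_zero hp0.ne')]
    exact hRHS0
  -- abbreviations
  set P : ℝ → ℝ≥0∞ := fun s => ENNReal.ofReal (deriv φ s) with hPdef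
  set W : ℝ → ℝ → ℝ≥0∞ := fun x t => ENNReal.ofReal ((φ x - φ t) ^ (α - 1)) with hWdef
  set G : ℝ → ℝ≥0∞ := fun t => ENNReal.ofReal ‖u t‖ with hGdef
  set H : ℝ → ℝ≥0∞ := fun t => ENNReal.ofReal (‖u t‖ ^ p * deriv φ t) with hHdef
  set C : ℝ≥0∞ := ENNReal.ofReal ((φ b - φ a) ^ α / α) with hCdef
  set Me : ℝ≥0∞ := ENNReal.ofReal M with hMedef
  have hPne : ∀ s, P s ≠ ⊤ := fun s => ENNReal.ofReal_ne_top
  have hPm : Measurable P := (measurable_deriv φ).ennreal_ofReal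
  have hWm : ∀ x, Measurable (fun t => W x t) :=
    fun x => ((measurable_const.sub hφ.continuous.measurable).pow
      measurable_const).ennreal_ofReal
  have hHaem : AEMeasurable H (volume.restrict (Icc a b)) :=
    hu.aestronglyMeasurable.aemeasurable.ennreal_ofReal
  obtain ⟨H', hH'm, hH'⟩ := hHaem
  have hHH' : ∀ s : Set ℝ, s ⊆ Icc a b → H =ᵐ[volume.restrict s] H' :=
    fun s hs => ae_restrict_of_ae_restrict_of_subset hs hH'
  have hPGH : ∀ t, H t = P t * G t ^ p := by
    intro t
    rw [hHdef, hPdef, hGdef]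
    simp only
    rw [ENNReal.ofReal_mul (Real.rpow_nonneg (norm_nonneg _) _),
      ENNReal.ofReal_rpow_of_nonneg (norm_nonneg _) hp0.le, mul_comm]
  -- Step A: pointwise bound on the generalised integral
  have hA1 : ∀ x ∈ Ioc a b, ENNReal.ofReal ‖AIphi a (α:ℂ) (β:ℂ) A φ u x‖ ≤
      Me * ∫⁻ t in Ioc a x, W x t * (P t * G t) := by
    intro x hx
    have hax : a ≤ x := hx.1.le
    have hcore : ∀ t ∈ Ioo a x,
        ENNReal.ofReal ‖((deriv φ t : ℝ) : ℂ) * (((φ x - φ t : ℝ)) : ℂ) ^ ((α:ℂ) - 1) *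
          A ((((φ x - φ t : ℝ)) : ℂ) ^ (β:ℂ)) * u t‖ ≤ Me * (W x t * (P t * G t)) := by
      intro t ht
      have hr : 0 < φ x - φ t := sub_pos.2 (hmono ht.2)
      have hrΦ : φ x - φ t < φ b - φ a := by
        have h1 := hmono ht.1
        have h2 := hmono.monotone hx.2
        linarith
      have hre1 : ((α:ℂ) - 1).re = α - 1 := by simp
      have hre2 : ((β:ℂ)).re = β := by simp
      have hmem : ((((φ x - φ t : ℝ)) : ℂ) ^ (β:ℂ)) ∈ Metric.ball (0:ℂ) ((φ b - φ a) ^ β) := by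
        rw [Metric.mem_ball, dist_zero_right,
          Complex.norm_cpow_eq_rpow_re_of_pos hr, hre2]
        exact Real.rpow_lt_rpow hr.le hrΦ hβ
      have hnorm : ‖((deriv φ t : ℝ) : ℂ) * (((φ x - φ t : ℝ)) : ℂ) ^ ((α:ℂ) - 1) *
          A ((((φ x - φ t : ℝ)) : ℂ) ^ (β:ℂ)) * u t‖
          = deriv φ t * ((φ x - φ t) ^ (α - 1)) *
            ‖A ((((φ x - φ t : ℝ)) : ℂ) ^ (β:ℂ))‖ * ‖u t‖ := by
        rw [norm_mul, norm_mul, norm_mul, Complex.norm_real, Real.norm_eq_abs,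
          abs_of_nonneg (hd t),
          Complex.norm_cpow_eq_rpow_re_of_pos hr, hre1]
      have hb1 : ‖((deriv φ t : ℝ) : ℂ) * (((φ x - φ t : ℝ)) : ℂ) ^ ((α:ℂ) - 1) *
          A ((((φ x - φ t : ℝ)) : ℂ) ^ (β:ℂ)) * u t‖
          ≤ M * ((φ x - φ t) ^ (α - 1) * (deriv φ t * ‖u t‖)) := by
        rw [hnorm]
        have := hMle _ hmem
        calc deriv φ t * ((φ x - φ t) ^ (α - 1)) * ‖A ((((φ x - φ t : ℝ)) : ℂ) ^ (β:ℂ))‖ * ‖u t‖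
            ≤ deriv φ t * ((φ x - φ t) ^ (α - 1)) * M * ‖u t‖ := by
              apply mul_le_mul_of_nonneg_right _ (norm_nonneg _)
              apply mul_le_mul_of_nonneg_left this
              exact mul_nonneg (hd t) (Real.rpow_nonneg hr.le _)
          _ = M * ((φ x - φ t) ^ (α - 1) * (deriv φ t * ‖u t‖)) := by ring
      calc ENNReal.ofReal ‖((deriv φ t : ℝ) : ℂ) * (((φ x - φ t : ℝ)) : ℂ) ^ ((α:ℂ) - 1) *
            A ((((φ x - φ t : ℝ)) : ℂ) ^ (β:ℂ)) * u t‖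
          ≤ ENNReal.ofReal (M * ((φ x - φ t) ^ (α - 1) * (deriv φ t * ‖u t‖))) :=
            ENNReal.ofReal_le_ofReal hb1
        _ = Me * (W x t * (P t * G t)) := by
            rw [hMedef, hWdef, hPdef, hGdef]
            simp only
            rw [ENNReal.ofReal_mul hM0, ENNReal.ofReal_mul (Real.rpow_nonneg hr.le _),
              ENNReal.ofReal_mul (hd t)]
    rw [AIphi, intervalIntegral.integral_of_le hax]
    calc ENNReal.ofReal ‖∫ t in Ioc a x, ((deriv φ t : ℝ) : ℂ) *
          (((φ x - φ t : ℝ)) : ℂ) ^ ((α:ℂ) - 1) *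
          A ((((φ x - φ t : ℝ)) : ℂ) ^ (β:ℂ)) * u t‖
        = ↑‖∫ t in Ioc a x, ((deriv φ t : ℝ) : ℂ) * (((φ x - φ t : ℝ)) : ℂ) ^ ((α:ℂ) - 1) *
            A ((((φ x - φ t : ℝ)) : ℂ) ^ (β:ℂ)) * u t‖₊ := by
          rw [ofReal_norm]; rfl
      _ ≤ ∫⁻ t in Ioc a x, ↑‖((deriv φ t : ℝ) : ℂ) * (((φ x - φ t : ℝ)) : ℂ) ^ ((α:ℂ) - 1) *
            A ((((φ x - φ t : ℝ)) : ℂ) ^ (β:ℂ)) * u t‖₊ :=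
          MeasureTheory.enorm_integral_le_lintegral_enorm _
      _ = ∫⁻ t in Ioo a x, ↑‖((deriv φ t : ℝ) : ℂ) * (((φ x - φ t : ℝ)) : ℂ) ^ ((α:ℂ) - 1) *
            A ((((φ x - φ t : ℝ)) : ℂ) ^ (β:ℂ)) * u t‖₊ := by
          rw [Measure.restrict_congr_set Ioo_ae_eq_Ioc]
      _ ≤ ∫⁻ t in Ioo a x, Me * (W x t * (P t * G t)) := by
          apply lintegral_mono_ae
          filter_upwards [ae_restrict_mem measurableSet_Ioo] with t ht
          exact (ofReal_norm _).symm.trans_le (hcore t ht)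
      _ = ∫⁻ t in Ioc a x, Me * (W x t * (P t * G t)) := by
          rw [Measure.restrict_congr_set Ioo_ae_eq_Ioc]
      _ = Me * ∫⁻ t in Ioc a x, W x t * (P t * G t) :=
          lintegral_const_mul' _ _ ENNReal.ofReal_ne_top
  -- Step B: Hoelder
  have hstep : ∀ x ∈ Ioc a b, (∫⁻ t in Ioc a x, W x t * (P t * G t))
      ≤ C ^ ((p-1)/p) * (∫⁻ t in Ioc a x, W x t * H t) ^ (1/p) := by
    intro x hx
    rcases eq_or_lt_of_le hp with hp1 | hp1
    · -- p = 1
      subst hp1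
      simp only [sub_self, zero_div, ENNReal.rpow_zero, one_mul, div_one, ENNReal.rpow_one]
      apply le_of_eq
      apply lintegral_congr
      intro t
      congr 1
      rw [hPGH t, ENNReal.rpow_one]
    · -- p > 1
      have hq := Real.HolderConjugate.conjExponent hp1
      set q : ℝ := p.conjExponent with hqdef
      have hq0 : 0 < q := hq.symm.pos
      have hsum : 1/p + 1/q = 1 := by
        rw [one_div, one_div]; exact hq.inv_add_inv_eq_one
      have hqeq : 1/q = (p-1)/p := by
        rw [hqdef, Real.conjExponent, one_div_div]
      have hWsplit : ∀ w : ℝ≥0∞, w = w ^ (1/p) * w ^ (1/q) := by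
        intro w
        rw [← ENNReal.rpow_add_of_nonneg _ _ (by positivity) (by positivity), hsum,
          ENNReal.rpow_one]
      have hHsplit : ∀ t, H t ^ (1/p) * P t ^ (1/q) = P t * G t := by
        intro t
        rw [hPGH t, ENNReal.mul_rpow_of_nonneg _ _ (by positivity : (0:ℝ) ≤ 1/p),
          ← ENNReal.rpow_mul (G t) p (1/p), mul_one_div, div_self hp0.ne', ENNReal.rpow_one]
        calc P t ^ (1/p) * G t * P t ^ (1/q) = G t * (P t ^ (1/p) * P t ^ (1/q)) := by ring
          _ = G t * P t := by rw [← hWsplit (P t)]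
          _ = P t * G t := mul_comm _ _
      have hfact : ∀ t, W x t * (P t * G t) =
          (W x t ^ (1/p) * H t ^ (1/p)) * (W x t ^ (1/q) * P t ^ (1/q)) := by
        intro t
        calc W x t * (P t * G t) = W x t * (H t ^ (1/p) * P t ^ (1/q)) := by rw [hHsplit]
          _ = (W x t ^ (1/p) * W x t ^ (1/q)) * (H t ^ (1/p) * P t ^ (1/q)) := by
              rw [← hWsplit]
          _ = (W x t ^ (1/p) * H t ^ (1/p)) * (W x t ^ (1/q) * P t ^ (1/q)) := by ring
      have hsub : Ioc a x ⊆ Icc a b := fun t ht => ⟨ht.1.le, le_trans ht.2 hx.2⟩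
      have hHaex : AEMeasurable H (volume.restrict (Ioc a x)) := by
        refine ⟨H', hH'm, hHH' _ hsub⟩
      have hf : AEMeasurable (fun t => W x t ^ (1/p) * H t ^ (1/p))
          (volume.restrict (Ioc a x)) :=
        ((hWm x).pow measurable_const).aemeasurable.mul (hHaex.pow aemeasurable_const)
      have hg : AEMeasurable (fun t => W x t ^ (1/q) * P t ^ (1/q))
          (volume.restrict (Ioc a x)) :=
        (((hWm x).pow measurable_const).mul (hPm.pow measurable_const)).aemeasurable
      have hHo := ENNReal.lintegral_mul_le_Lp_mul_Lq (volume.restrict (Ioc a x)) hq hf hg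
      have hLHS : ∫⁻ t in Ioc a x, ((fun t => W x t ^ (1/p) * H t ^ (1/p)) *
          (fun t => W x t ^ (1/q) * P t ^ (1/q))) t = ∫⁻ t in Ioc a x, W x t * (P t * G t) := by
        apply lintegral_congr
        intro t
        rw [Pi.mul_apply, ← hfact]
      have hfp : ∫⁻ t in Ioc a x, (W x t ^ (1/p) * H t ^ (1/p)) ^ p
          = ∫⁻ t in Ioc a x, W x t * H t := by
        apply lintegral_congr
        intro t
        rw [ENNReal.mul_rpow_of_nonneg _ _ hp0.le, ← ENNReal.rpow_mul, ← ENNReal.rpow_mul,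
          one_div_mul_cancel hp0.ne', ENNReal.rpow_one, ENNReal.rpow_one]
      have hgq : ∫⁻ t in Ioc a x, (W x t ^ (1/q) * P t ^ (1/q)) ^ q
          = ∫⁻ t in Ioc a x, W x t * P t := by
        apply lintegral_congr
        intro t
        rw [ENNReal.mul_rpow_of_nonneg _ _ hq0.le, ← ENNReal.rpow_mul, ← ENNReal.rpow_mul,
          one_div_mul_cancel hq0.ne', ENNReal.rpow_one, ENNReal.rpow_one]
      have hgC : ∫⁻ t in Ioc a x, W x t * P t ≤ C := by
        have := lint_C1 hφ hmono hd hα hx.1.le hx.2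
        refine le_trans (le_of_eq ?_) this
        apply lintegral_congr
        intro t
        rw [mul_comm]
      rw [hLHS, hfp, hgq] at hHo
      refine le_trans hHo ?_
      rw [mul_comm]
      apply mul_le_mul_left
      rw [← hqeq]
      exact ENNReal.rpow_le_rpow hgC (by positivity)
  -- Step B': combined bound, with measurable H'
  have hB : ∀ x ∈ Ioc a b, (ENNReal.ofReal ‖AIphi a (α:ℂ) (β:ℂ) A φ u x‖) ^ p ≤
      Me ^ p * C ^ (p-1) * ∫⁻ t in Ioc a x, W x t * H' t := by
    intro x hx
    have hsub : Ioc a x ⊆ Icc a b := fun t ht => ⟨ht.1.le, le_trans ht.2 hx.2⟩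
    have hHeq : ∫⁻ t in Ioc a x, W x t * H t = ∫⁻ t in Ioc a x, W x t * H' t := by
      apply lintegral_congr_ae
      filter_upwards [hHH' _ hsub] with t ht
      rw [ht]
    calc (ENNReal.ofReal ‖AIphi a (α:ℂ) (β:ℂ) A φ u x‖) ^ p
        ≤ (Me * (C ^ ((p-1)/p) * (∫⁻ t in Ioc a x, W x t * H t) ^ (1/p))) ^ p := by
          apply ENNReal.rpow_le_rpow _ hp0.le
          exact le_trans (hA1 x hx) (mul_le_mul_right (hstep x hx) Me)
      _ = Me ^ p * C ^ (p-1) * ∫⁻ t in Ioc a x, W x t * H t := by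
          rw [ENNReal.mul_rpow_of_nonneg _ _ hp0.le, ENNReal.mul_rpow_of_nonneg _ _ hp0.le,
            ← ENNReal.rpow_mul, ← ENNReal.rpow_mul, div_mul_cancel₀ _ hp0.ne',
            one_div_mul_cancel hp0.ne', ENNReal.rpow_one, mul_assoc]
      _ = Me ^ p * C ^ (p-1) * ∫⁻ t in Ioc a x, W x t * H' t := by rw [hHeq]
  -- Tonelli
  set μ := volume.restrict (Ioc a b) with hμdef
  set F : ℝ → ℝ → ℝ≥0∞ := fun x t => if t ≤ x then P x * (W x t * H' t) else 0 with hFdef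
  have hFm : Measurable (Function.uncurry F) := by
    have : Function.uncurry F = fun q : ℝ × ℝ =>
        if q.2 ≤ q.1 then P q.1 * (W q.1 q.2 * H' q.2) else 0 := rfl
    rw [this]
    apply Measurable.ite (measurableSet_le measurable_snd measurable_fst)
    · apply Measurable.mul (hPm.comp measurable_fst)
      apply Measurable.mul _ (hH'm.comp measurable_snd)
      exact (((hφ.continuous.measurable.comp measurable_fst).sub
        (hφ.continuous.measurable.comp measurable_snd)).pow measurable_const).ennreal_ofReal
    · exact measurable_const
  have hs1 : ∀ x ∈ Ioc a b, ∫⁻ t, F x t ∂μ = (∫⁻ t in Ioc a x, W x t * H' t) * P x := by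
    intro x hx
    have hind : ∀ t, F x t = (Iic x).indicator (fun t => P x * (W x t * H' t)) t := by
      intro t
      simp [hFdef, Set.indicator_apply, Set.mem_Iic]
    rw [lintegral_congr hind, lintegral_indicator measurableSet_Iic,
      hμdef, Measure.restrict_restrict measurableSet_Iic]
    have hset : Iic x ∩ Ioc a b = Ioc a x := by
      ext t
      simp only [mem_inter_iff, mem_Iic, mem_Ioc]
      constructor
      · rintro ⟨h1, h2, h3⟩; exact ⟨h2, h1⟩
      · rintro ⟨h1, h2⟩; exact ⟨h2, h1, le_trans h2 hx.2⟩
    rw [hset, lintegral_const_mul' _ _ (hPne x), mul_comm]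
  have hs2 : ∀ t ∈ Ioc a b, ∫⁻ x, F x t ∂μ ≤ C * H' t := by
    intro t ht
    have hind : ∀ x, F x t = (Ici t).indicator (fun x => (P x * W x t) * H' t) x := by
      intro x
      simp [hFdef, Set.indicator_apply, Set.mem_Ici, mul_assoc]
    rw [lintegral_congr hind, lintegral_indicator measurableSet_Ici,
      hμdef, Measure.restrict_restrict measurableSet_Ici]
    have hset : Ici t ∩ Ioc a b = Icc t b := by
      ext x
      simp only [mem_inter_iff, mem_Ici, mem_Ioc, mem_Icc]
      constructor
      · rintro ⟨h1, _, h3⟩; exact ⟨h1, h3⟩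
      · rintro ⟨h1, h2⟩; exact ⟨h1, lt_of_lt_of_le ht.1 h1, h2⟩
    have hWtm : Measurable (fun x => W x t) :=
      ((hφ.continuous.measurable.sub measurable_const).pow measurable_const).ennreal_ofReal
    rw [hset, lintegral_mul_const (f := fun x => P x * W x t) _ (hPm.mul hWtm)]
    apply mul_le_mul_left
    rw [← Measure.restrict_congr_set Ioc_ae_eq_Icc]
    exact lint_C2 hφ hmono hd hα ht.1.le ht.2
  have hswap : ∫⁻ x in Ioc a b, (∫⁻ t in Ioc a x, W x t * H' t) * P x ≤
      C * ∫⁻ t in Ioc a b, H' t := by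
    have h1 : ∫⁻ x in Ioc a b, (∫⁻ t in Ioc a x, W x t * H' t) * P x
        = ∫⁻ x, ∫⁻ t, F x t ∂μ ∂μ := by
      apply lintegral_congr_ae
      filter_upwards [ae_restrict_mem measurableSet_Ioc] with x hx
      rw [hs1 x hx]
    rw [h1, lintegral_lintegral_swap hFm.aemeasurable]
    calc ∫⁻ t, ∫⁻ x, F x t ∂μ ∂μ ≤ ∫⁻ t, C * H' t ∂μ := by
          apply lintegral_mono_ae
          filter_upwards [ae_restrict_mem measurableSet_Ioc] with t ht
          exact hs2 t ht
      _ = C * ∫⁻ t, H' t ∂μ := lintegral_const_mul' _ _ ENNReal.ofReal_ne_top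
  have hUeq : ∫⁻ t in Ioc a b, H' t = ∫⁻ t in Ioc a b, H t :=
    lintegral_congr_ae (hHH' _ Ioc_subset_Icc_self).symm
  have hUlt : ∫⁻ t in Ioc a b, H t < ⊤ := by
    have hle : ∀ t, H t ≤ (‖‖u t‖ ^ p * deriv φ t‖₊ : ℝ≥0∞) :=
      fun t => Real.ofReal_le_enorm _
    calc ∫⁻ t in Ioc a b, H t
        ≤ ∫⁻ t in Ioc a b, (‖‖u t‖ ^ p * deriv φ t‖₊ : ℝ≥0∞) := lintegral_mono hle
      _ ≤ ∫⁻ t in Icc a b, (‖‖u t‖ ^ p * deriv φ t‖₊ : ℝ≥0∞) :=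
          lintegral_mono' (Measure.restrict_mono Ioc_subset_Icc_self le_rfl) le_rfl
      _ < ⊤ := hu.2
  have hCC : C ^ (p-1) * C = C ^ p := by
    have h1 : C ^ ((p-1) + 1) = C ^ (p-1) * C ^ (1:ℝ) :=
      ENNReal.rpow_add_of_nonneg _ _ (by linarith) zero_le_one
    rw [ENNReal.rpow_one] at h1
    rw [← h1]
    norm_num
  have hKne : Me ^ p * C ^ (p-1) ≠ ⊤ :=
    ENNReal.mul_ne_top (ENNReal.rpow_ne_top_of_nonneg hp0.le ENNReal.ofReal_ne_top)
      (ENNReal.rpow_ne_top_of_nonneg (by linarith) ENNReal.ofReal_ne_top)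
  have hL : ∫⁻ x in Ioc a b, (ENNReal.ofReal ‖AIphi a (α:ℂ) (β:ℂ) A φ u x‖) ^ p * P x ≤
      (Me * C) ^ p * ∫⁻ t in Ioc a b, H t := by
    have hLB : ∫⁻ x in Ioc a b, (ENNReal.ofReal ‖AIphi a (α:ℂ) (β:ℂ) A φ u x‖) ^ p * P x ≤
        (Me ^ p * C ^ (p-1)) * ∫⁻ x in Ioc a b, (∫⁻ t in Ioc a x, W x t * H' t) * P x := by
      rw [← lintegral_const_mul' _ _ hKne]
      apply lintegral_mono_ae
      filter_upwards [ae_restrict_mem measurableSet_Ioc] with x hx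
      calc (ENNReal.ofReal ‖AIphi a (α:ℂ) (β:ℂ) A φ u x‖) ^ p * P x
          ≤ (Me ^ p * C ^ (p-1) * ∫⁻ t in Ioc a x, W x t * H' t) * P x :=
            mul_le_mul_left (hB x hx) _
        _ = (Me ^ p * C ^ (p-1)) * ((∫⁻ t in Ioc a x, W x t * H' t) * P x) := by ring
    refine le_trans hLB (le_trans (mul_le_mul_right hswap _) (le_of_eq ?_))
    rw [hUeq]
    have h2 : Me ^ p * C ^ (p-1) * (C * ∫⁻ t in Ioc a b, H t)
        = Me ^ p * (C ^ (p-1) * C) * ∫⁻ t in Ioc a b, H t := by ring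
    rw [h2, hCC, ← ENNReal.mul_rpow_of_nonneg _ _ hp0.le]
  have hLreal : ∫ x in Ioc a b, ‖AIphi a (α:ℂ) (β:ℂ) A φ u x‖ ^ p * deriv φ x
      = (∫⁻ x in Ioc a b, (ENNReal.ofReal ‖AIphi a (α:ℂ) (β:ℂ) A φ u x‖) ^ p * P x).toReal := by
    rw [MeasureTheory.integral_eq_lintegral_of_nonneg_ae
      (ae_of_all _ fun x => mul_nonneg (Real.rpow_nonneg (norm_nonneg _) _) (hd x))
      hInt.aestronglyMeasurable]
    congr 1
    apply lintegral_congr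
    intro x
    rw [ENNReal.ofReal_mul (Real.rpow_nonneg (norm_nonneg _) _),
      ← ENNReal.ofReal_rpow_of_nonneg (norm_nonneg _) hp0.le]
  have hUreal : ∫ x in Ioc a b, ‖u x‖ ^ p * deriv φ x = (∫⁻ t in Ioc a b, H t).toReal := by
    rw [MeasureTheory.integral_eq_lintegral_of_nonneg_ae
      (ae_of_all _ fun x => mul_nonneg (Real.rpow_nonneg (norm_nonneg _) _) (hd x))
      ((hu.mono_set Ioc_subset_Icc_self).aestronglyMeasurable)]
  rw [hLreal, hUreal]
  have hfin : (Me * C) ^ p * ∫⁻ t in Ioc a b, H t ≠ ⊤ :=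
    ENNReal.mul_ne_top (ENNReal.rpow_ne_top_of_nonneg hp0.le
      (ENNReal.mul_ne_top ENNReal.ofReal_ne_top ENNReal.ofReal_ne_top)) hUlt.ne
  calc ((∫⁻ x in Ioc a b, (ENNReal.ofReal ‖AIphi a (α:ℂ) (β:ℂ) A φ u x‖) ^ p * P x).toReal) ^ (1/p)
      ≤ (((Me * C) ^ p * ∫⁻ t in Ioc a b, H t).toReal) ^ (1/p) :=
        Real.rpow_le_rpow ENNReal.toReal_nonneg (ENNReal.toReal_mono hfin hL) (by positivity)
    _ = (Me * C).toReal * ((∫⁻ t in Ioc a b, H t).toReal) ^ (1/p) := by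
        rw [ENNReal.toReal_mul, ← ENNReal.toReal_rpow,
          Real.mul_rpow (by positivity) ENNReal.toReal_nonneg,
          ← Real.rpow_mul ENNReal.toReal_nonneg, mul_one_div, div_self hp0.ne',
          Real.rpow_one]
    _ = ((φ b - φ a) ^ α / α * M) * ((∫⁻ t in Ioc a b, H t).toReal) ^ (1/p) := by
        rw [hMedef, hCdef, ENNReal.toReal_mul, ENNReal.toReal_ofReal hM0,
          ENNReal.toReal_ofReal hC0, mul_comm M]
end

section
/- If u : [0,∞) → ℝ is of φ-exponential order c, then for every γ with Re(γ) > 0 its fractional integral ᴿᴸI₀^{γ,φ} u with respect to φ is also of φ-exponential order (with order any c' > c). -/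
open MeasureTheory Set Filter
open scoped NNReal Real Topology

private lemma aux_deriv_nonneg {φ : ℝ → ℝ} (hφ : Differentiable ℝ φ)
    (hmono : StrictMonoOn φ (Ici 0)) : ∀ t : ℝ, 0 ≤ t → 0 ≤ deriv φ t := by
  intro t ht
  have h := (hφ t).hasDerivAt
  rw [hasDerivAt_iff_tendsto_slope] at h
  have h' : Tendsto (slope φ t) (𝓝[>] t) (𝓝 (deriv φ t)) :=
    h.mono_left (nhdsWithin_mono t fun y hy => ne_of_gt hy)
  refine ge_of_tendsto h' ?_
  filter_upwards [self_mem_nhdsWithin] with y (hy : t < y)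
  rw [slope_def_field]
  exact div_nonneg (sub_nonneg.2 ((hmono.monotoneOn) (mem_Ici.2 ht)
    (mem_Ici.2 (ht.trans hy.le)) hy.le)) (sub_nonneg.2 hy.le)

private lemma aux_kernel {φ : ℝ → ℝ} (hφ : ContDiff ℝ 1 φ)
    (hmono : StrictMonoOn φ (Ici 0)) {a b q : ℝ} (ha : 0 ≤ a) (hab : a < b) (hq : 0 < q) :
    IntegrableOn (fun t => deriv φ t * (φ b - φ t) ^ (q - 1)) (Ioc a b) ∧
      ∫ t in Ioc a b, deriv φ t * (φ b - φ t) ^ (q - 1) = (φ b - φ a) ^ q / q := by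
  have hdiff := hφ.differentiable one_ne_zero
  have hdnn := aux_deriv_nonneg hdiff hmono
  set g' : ℝ → ℝ := fun t => deriv φ t * (φ b - φ t) ^ (q - 1) with hg'
  set g : ℝ → ℝ := fun t => -((φ b - φ t) ^ q / q) with hg
  have hcont : ContinuousOn g (Icc a b) := by
    apply ContinuousOn.neg; apply ContinuousOn.div_const
    intro t _
    exact ((continuousAt_const.sub hφ.continuous.continuousAt).rpow_const
      (Or.inr hq.le)).continuousWithinAt
  have hderiv : ∀ t ∈ Ioo a b, HasDerivAt g (g' t) t := by
    intro t ht
    have htnn : (0:ℝ) ≤ t := ha.trans ht.1.le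
    have hr : 0 < φ b - φ t :=
      sub_pos.2 (hmono (mem_Ici.2 htnn) (mem_Ici.2 (ha.trans hab.le)) ht.2)
    have h1 : HasDerivAt (fun s => φ b - φ s) (-deriv φ t) t := by
      have := (hasDerivAt_const t (φ b)).sub (hdiff t).hasDerivAt
      rwa [zero_sub] at this
    have h2 := (Real.hasDerivAt_rpow_const (p := q) (Or.inl hr.ne')).comp t h1
    have h3 := (h2.div_const q).neg
    refine h3.congr_deriv ?_
    field_simp
    ring
  have hpos : ∀ t ∈ Ioo a b, 0 ≤ g' t := by
    intro t ht
    exact mul_nonneg (hdnn t (ha.trans ht.1.le))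
      (Real.rpow_nonneg (sub_nonneg.2 (hmono.monotoneOn (mem_Ici.2 (ha.trans ht.1.le))
        (mem_Ici.2 (ha.trans hab.le)) ht.2.le)) _)
  have hint : IntegrableOn g' (Ioc a b) := intervalIntegral.integrableOn_deriv_of_nonneg hcont hderiv hpos
  refine ⟨hint, ?_⟩
  have hval := intervalIntegral.integral_eq_sub_of_hasDeriv_right_of_le hab.le hcont
    (fun t ht => (hderiv t ht).hasDerivWithinAt)
    ((intervalIntegrable_iff_integrableOn_Ioc_of_le hab.le).mpr hint)
  rw [intervalIntegral.integral_of_le hab.le] at hval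
  rw [hval, hg]
  show -((φ b - φ b) ^ q / q) - -((φ b - φ a) ^ q / q) = (φ b - φ a) ^ q / q
  rw [sub_self, Real.zero_rpow hq.ne', zero_div, neg_zero, zero_sub, neg_neg]

set_option maxHeartbeats 1000000 in
/-- Fractional integration with respect to `φ` preserves `φ`-exponential boundedness:
if `u` is of `φ`-exponential order `c`, then `ᴿᴸI₀^{γ,φ} u` is of `φ`-exponential
order `c'` for every `c' > c`. -/
theorem rl_integral_wrt_preserves_exponential_order (φ : ℝ → ℝ) (hφ : ContDiff ℝ 1 φ)
    (hmono : StrictMonoOn φ (Ici 0)) (h0 : φ 0 = 0) (hnn : ∀ x ≥ (0 : ℝ), 0 ≤ φ x)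
    (htop : Tendsto φ atTop atTop)
    (u : ℝ → ℂ) (c : ℝ) (hc : 0 < c)
    (hloc : ∀ T > (0 : ℝ), IntegrableOn u (Icc 0 T))
    (M X : ℝ) (hM : 0 < M) (hbound : ∀ x > X, ‖u x‖ ≤ M * Real.exp (c * φ x))
    (γ : ℂ) (hγ : 0 < γ.re) :
    ∀ c' > c, ∃ M' X' : ℝ, 0 < M' ∧ ∀ x > X',
      ‖RLIphi 0 γ φ u x‖ ≤ M' * Real.exp (c' * φ x) := by
  intro c' hc'
  have hdiff := hφ.differentiable one_ne_zero
  have hdnn := aux_deriv_nonneg hdiff hmono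
  have hderiv_cont : Continuous (deriv φ) := hφ.continuous_deriv le_rfl
  set q : ℝ := γ.re with hqdef
  have hq : 0 < q := hγ
  set G : ℝ := ‖(Complex.Gamma γ)⁻¹‖ with hGdef
  have hG : 0 ≤ G := norm_nonneg _
  set X₀ : ℝ := max X 1 with hX₀def
  have hX₀pos : (0:ℝ) < X₀ := lt_of_lt_of_le one_pos (le_max_right _ _)
  have hXX₀ : X ≤ X₀ := le_max_left _ _
  have hφX₀ : 0 ≤ φ X₀ := hnn X₀ hX₀pos.le
  obtain ⟨K, hK⟩ := (isCompact_Icc : IsCompact (Icc (0:ℝ) X₀)).exists_bound_of_continuousOn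
    hderiv_cont.continuousOn
  have hK0 : 0 ≤ K := le_trans (norm_nonneg _) (hK 0 ⟨le_refl 0, hX₀pos.le⟩)
  set I : ℝ := ∫ t in Icc (0:ℝ) X₀, ‖u t‖ with hIdef
  have hI : 0 ≤ I := integral_nonneg fun t => norm_nonneg _
  have hUint : IntegrableOn (fun t => ‖u t‖) (Icc 0 X₀) := (hloc X₀ hX₀pos).norm
  set ε : ℝ := c' - c with hεdef
  have hε : 0 < ε := sub_pos.2 hc'
  have hzero : Tendsto (fun y : ℝ => (G*K*I) * Real.exp (-(ε*y)) +
      ((G*K*I) * (y^(q-1) * Real.exp (-(ε*y))) + (G*M/q) * (y^q * Real.exp (-(ε*y)))))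
      atTop (𝓝 0) := by
    have h1 : Tendsto (fun y : ℝ => Real.exp (-(ε*y))) atTop (𝓝 0) :=
      Real.tendsto_exp_neg_atTop_nhds_zero.comp (tendsto_id.const_mul_atTop hε)
    have h2 := tendsto_rpow_mul_exp_neg_mul_atTop_nhds_zero (q-1) ε hε
    have h3 := tendsto_rpow_mul_exp_neg_mul_atTop_nhds_zero q ε hε
    have h2' : Tendsto (fun y : ℝ => y^(q-1) * Real.exp (-(ε*y))) atTop (𝓝 0) := by
      simpa [neg_mul] using h2
    have h3' : Tendsto (fun y : ℝ => y^q * Real.exp (-(ε*y))) atTop (𝓝 0) := by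
      simpa [neg_mul] using h3
    have hsum := (h1.const_mul (G*K*I)).add ((h2'.const_mul (G*K*I)).add (h3'.const_mul (G*M/q)))
    simpa using hsum
  have hev : ∀ᶠ y in atTop, G*K*I*(1 + y^(q-1)) + G*M/q * y^q ≤ Real.exp (ε*y) := by
    filter_upwards [hzero.eventually_lt_const one_pos] with y hy
    have hexpos := Real.exp_pos (ε*y)
    have heq : (G*K*I*(1 + y^(q-1)) + G*M/q * y^q) * (Real.exp (ε*y))⁻¹ =
        (G*K*I) * Real.exp (-(ε*y)) +
        ((G*K*I) * (y^(q-1) * Real.exp (-(ε*y))) + (G*M/q) * (y^q * Real.exp (-(ε*y)))) := by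
      rw [Real.exp_neg]; ring
    have h' : (G*K*I*(1 + y^(q-1)) + G*M/q * y^q) * (Real.exp (ε*y))⁻¹ ≤ 1 := by
      rw [heq]; exact hy.le
    calc G*K*I*(1 + y^(q-1)) + G*M/q * y^q
        = (G*K*I*(1 + y^(q-1)) + G*M/q * y^q) * (Real.exp (ε*y))⁻¹ * Real.exp (ε*y) := by
          field_simp
      _ ≤ 1 * Real.exp (ε*y) := mul_le_mul_of_nonneg_right h' hexpos.le
      _ = Real.exp (ε*y) := one_mul _
  have hbig : ∀ᶠ x in atTop, (φ X₀ + 1 ≤ φ x) ∧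
      (G*K*I*(1 + (φ x)^(q-1)) + G*M/q * (φ x)^q ≤ Real.exp (ε * φ x)) ∧ X₀ < x :=
    (htop.eventually (eventually_ge_atTop (φ X₀ + 1))).and
      ((htop.eventually hev).and (eventually_gt_atTop X₀))
  obtain ⟨X', hX'⟩ := eventually_atTop.mp hbig
  refine ⟨1, X', one_pos, ?_⟩
  intro x hx
  obtain ⟨hφx1, hexpineq, hxX₀⟩ := hX' x hx.le
  have hx0 : (0:ℝ) < x := hX₀pos.trans hxX₀
  have hφxnn : 0 ≤ φ x := hnn x hx0.le
  have hφx1' : 1 ≤ φ x := by linarith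
  set f : ℝ → ℝ := fun t =>
    ‖((deriv φ t : ℝ) : ℂ) * (((φ x - φ t : ℝ)) : ℂ) ^ (γ - 1) * u t‖ with hfdef
  -- measurability of f
  have hfm : AEStronglyMeasurable f (volume.restrict (Icc 0 x)) := by
    have hb : Measurable fun t : ℝ => ((φ x - φ t : ℝ) : ℂ) :=
      Complex.measurable_ofReal.comp (measurable_const.sub hφ.continuous.measurable)
    have hm2 : Measurable fun t : ℝ => (((φ x - φ t : ℝ)) : ℂ) ^ (γ - 1) := by
      simp_rw [Complex.cpow_def]
      refine Measurable.ite (hb (measurableSet_singleton 0)) measurable_const ?_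
      exact (hb.clog.mul measurable_const).cexp
    have hm1 : Measurable fun t : ℝ => ((deriv φ t : ℝ) : ℂ) :=
      Complex.measurable_ofReal.comp hderiv_cont.measurable
    have hu : AEStronglyMeasurable u (volume.restrict (Icc 0 x)) :=
      (hloc x hx0).aestronglyMeasurable
    exact (((hm1.mul hm2).aestronglyMeasurable).mul hu).norm
  -- pointwise identification of f
  have hfeq : ∀ t ∈ Ioo (0:ℝ) x, f t = deriv φ t * (φ x - φ t)^(q-1) * ‖u t‖ := by
    intro t ht
    have hr : 0 < φ x - φ t :=
      sub_pos.2 (hmono (mem_Ici.2 ht.1.le) (mem_Ici.2 hx0.le) ht.2)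
    have hcp : ‖(((φ x - φ t : ℝ)) : ℂ) ^ (γ - 1)‖ = (φ x - φ t)^(q-1) := by
      rw [Complex.norm_cpow_eq_rpow_re_of_pos hr, Complex.sub_re,
        Complex.one_re]
    show ‖((deriv φ t : ℝ) : ℂ) * (((φ x - φ t : ℝ)) : ℂ) ^ (γ - 1) * u t‖ = _
    rw [norm_mul, norm_mul, hcp, Complex.norm_real, Real.norm_eq_abs,
      abs_of_nonneg (hdnn t ht.1.le)]
  set D : ℝ := 1 + (φ x)^(q-1) with hDdef
  have hD0 : 0 ≤ D := by
    have : (0:ℝ) ≤ (φ x)^(q-1) := Real.rpow_nonneg hφxnn _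
    rw [hDdef]; linarith
  -- Part 1 : on Ioo 0 X₀
  have hle1 : ∀ t ∈ Ioo (0:ℝ) X₀, f t ≤ K * D * ‖u t‖ := by
    intro t ht
    have htx : t < x := ht.2.trans hxX₀
    have hφt : φ t ≤ φ X₀ := hmono.monotoneOn (mem_Ici.2 ht.1.le) (mem_Ici.2 hX₀pos.le) ht.2.le
    have hφtnn : 0 ≤ φ t := hnn t ht.1.le
    have hr1 : 1 ≤ φ x - φ t := by linarith
    have hrle : φ x - φ t ≤ φ x := by linarith
    have hker : (φ x - φ t)^(q-1) ≤ D := by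
      have h0 : (0:ℝ) ≤ (φ x)^(q-1) := Real.rpow_nonneg hφxnn _
      rcases le_or_gt 1 q with h | h
      · have := Real.rpow_le_rpow (z := q-1) (by linarith) hrle (by linarith)
        rw [hDdef]; linarith
      · have h1 := Real.rpow_le_one_of_one_le_of_nonpos (z := q-1) hr1 (by linarith)
        rw [hDdef]; linarith
    have hKt : deriv φ t ≤ K := by
      have := hK t ⟨ht.1.le, ht.2.le⟩
      rwa [Real.norm_eq_abs, abs_of_nonneg (hdnn t ht.1.le)] at this
    rw [hfeq t ⟨ht.1, htx⟩]
    have h1 : deriv φ t * (φ x - φ t)^(q-1) ≤ K * D :=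
      mul_le_mul hKt hker (Real.rpow_nonneg (by linarith) _) hK0
    exact mul_le_mul_of_nonneg_right h1 (norm_nonneg _)
  have hg1 : IntegrableOn (fun t => K * D * ‖u t‖) (Ioo 0 X₀) :=
    ((hUint.mono_set Ioo_subset_Icc_self).const_mul _)
  have hint1 : IntegrableOn f (Ioo 0 X₀) := by
    refine Integrable.mono hg1 (hfm.mono_set fun t ht => mem_Icc.mpr ⟨ht.1.le, ht.2.le.trans hxX₀.le⟩) ?_
    refine (ae_restrict_iff' measurableSet_Ioo).mpr (ae_of_all _ fun t ht => ?_)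
    rw [Real.norm_eq_abs, Real.norm_eq_abs, abs_of_nonneg (norm_nonneg _),
      abs_of_nonneg (mul_nonneg (mul_nonneg hK0 hD0) (norm_nonneg _))]
    exact hle1 t ht
  have hval1 : ∫ t in Ioo (0:ℝ) X₀, f t ≤ K * D * I := by
    calc ∫ t in Ioo (0:ℝ) X₀, f t ≤ ∫ t in Ioo (0:ℝ) X₀, K * D * ‖u t‖ :=
          setIntegral_mono_on hint1 hg1 measurableSet_Ioo hle1
      _ = K * D * ∫ t in Ioo (0:ℝ) X₀, ‖u t‖ := integral_const_mul _ _
      _ ≤ K * D * I := by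
          refine mul_le_mul_of_nonneg_left ?_ (mul_nonneg hK0 hD0)
          exact setIntegral_mono_set hUint (ae_of_all _ fun t => norm_nonneg _)
            (HasSubset.Subset.eventuallyLE Ioo_subset_Icc_self)
  -- Part 2 : on Ioo X₀ x
  obtain ⟨hker_int, hker_val⟩ := aux_kernel hφ hmono hX₀pos.le hxX₀ hq
  set E : ℝ := M * Real.exp (c * φ x) with hEdef
  have hE0 : 0 ≤ E := by positivity
  have hle2 : ∀ t ∈ Ioo X₀ x, f t ≤ E * (deriv φ t * (φ x - φ t)^(q-1)) := by
    intro t ht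
    have ht0 : 0 < t := hX₀pos.trans ht.1
    have hφtx : φ t ≤ φ x := hmono.monotoneOn (mem_Ici.2 ht0.le) (mem_Ici.2 hx0.le) ht.2.le
    rw [hfeq t ⟨ht0, ht.2⟩]
    have hub : ‖u t‖ ≤ E := by
      have h1 := hbound t (lt_of_le_of_lt hXX₀ ht.1)
      have h2 : Real.exp (c * φ t) ≤ Real.exp (c * φ x) :=
        Real.exp_le_exp.2 (by nlinarith)
      rw [hEdef]; nlinarith
    have hkn : 0 ≤ deriv φ t * (φ x - φ t)^(q-1) :=
      mul_nonneg (hdnn t ht0.le) (Real.rpow_nonneg (by linarith) _)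
    calc deriv φ t * (φ x - φ t)^(q-1) * ‖u t‖
        ≤ deriv φ t * (φ x - φ t)^(q-1) * E := mul_le_mul_of_nonneg_left hub hkn
      _ = E * (deriv φ t * (φ x - φ t)^(q-1)) := by ring
  have hg2 : IntegrableOn (fun t => E * (deriv φ t * (φ x - φ t)^(q-1))) (Ioo X₀ x) :=
    ((hker_int.mono_set Ioo_subset_Ioc_self).const_mul _)
  have hint2 : IntegrableOn f (Ioo X₀ x) := by
    refine Integrable.mono hg2 (hfm.mono_set fun t ht => mem_Icc.mpr ⟨hX₀pos.le.trans ht.1.le, ht.2.le⟩) ?_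
    refine (ae_restrict_iff' measurableSet_Ioo).mpr (ae_of_all _ fun t ht => ?_)
    have ht0 : 0 < t := hX₀pos.trans ht.1
    have hkn : 0 ≤ deriv φ t * (φ x - φ t)^(q-1) :=
      mul_nonneg (hdnn t ht0.le)
        (Real.rpow_nonneg (sub_nonneg.2 (hmono.monotoneOn (mem_Ici.2 ht0.le)
          (mem_Ici.2 hx0.le) ht.2.le)) _)
    rw [Real.norm_eq_abs, Real.norm_eq_abs, abs_of_nonneg (norm_nonneg _),
      abs_of_nonneg (mul_nonneg hE0 hkn)]
    exact hle2 t ht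
  have hval2 : ∫ t in Ioo X₀ x, f t ≤ E * ((φ x)^q / q) := by
    calc ∫ t in Ioo X₀ x, f t ≤ ∫ t in Ioo X₀ x, E * (deriv φ t * (φ x - φ t)^(q-1)) :=
          setIntegral_mono_on hint2 hg2 measurableSet_Ioo hle2
      _ = E * ∫ t in Ioo X₀ x, deriv φ t * (φ x - φ t)^(q-1) := integral_const_mul _ _
      _ = E * ((φ x - φ X₀)^q / q) := by rw [← integral_Ioc_eq_integral_Ioo, hker_val]
      _ ≤ E * ((φ x)^q / q) := by
          refine mul_le_mul_of_nonneg_left ?_ hE0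
          exact (div_le_div_iff_of_pos_right hq).mpr (Real.rpow_le_rpow (z := q) (by linarith) (by linarith) hq.le)
  -- split the integral
  have hsplit : ∫ t in Ioc (0:ℝ) x, f t =
      (∫ t in Ioo (0:ℝ) X₀, f t) + ∫ t in Ioo X₀ x, f t := by
    have e1 : IntegrableOn f (Ioc (0:ℝ) X₀) := (integrableOn_Ioc_iff_integrableOn_Ioo).mpr hint1
    have e2 : IntegrableOn f (Ioc X₀ x) := (integrableOn_Ioc_iff_integrableOn_Ioo).mpr hint2
    rw [← Ioc_union_Ioc_eq_Ioc hX₀pos.le hxX₀.le,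
      setIntegral_union (Ioc_disjoint_Ioc_of_le le_rfl) measurableSet_Ioc e1 e2,
      integral_Ioc_eq_integral_Ioo, integral_Ioc_eq_integral_Ioo]
  -- step 1 : bound the norm by the integral of f
  have hstep1 : ‖RLIphi 0 γ φ u x‖ ≤ G * ∫ t in Ioc (0:ℝ) x, f t := by
    rw [RLIphi, norm_mul]
    refine mul_le_mul_of_nonneg_left ?_ hG
    calc ‖∫ t in (0:ℝ)..x, ((deriv φ t : ℝ) : ℂ) * (((φ x - φ t : ℝ)) : ℂ) ^ (γ - 1) * u t‖
        ≤ ∫ t in (0:ℝ)..x, f t := intervalIntegral.norm_integral_le_integral_norm hx0.le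
      _ = ∫ t in Ioc (0:ℝ) x, f t := intervalIntegral.integral_of_le hx0.le
  -- final computation
  have hE1 : 1 ≤ Real.exp (c * φ x) := by
    rw [← Real.exp_zero]
    exact Real.exp_le_exp.2 (mul_nonneg hc.le hφxnn)
  have hGKID : 0 ≤ G*K*I*D := mul_nonneg (mul_nonneg (mul_nonneg hG hK0) hI) hD0
  calc ‖RLIphi 0 γ φ u x‖ ≤ G * ∫ t in Ioc (0:ℝ) x, f t := hstep1
    _ = G * ((∫ t in Ioo (0:ℝ) X₀, f t) + ∫ t in Ioo X₀ x, f t) := by rw [hsplit]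
    _ ≤ G * (K * D * I + E * ((φ x)^q / q)) :=
        mul_le_mul_of_nonneg_left (add_le_add hval1 hval2) hG
    _ = G*K*I*D + (G*M/q * (φ x)^q) * Real.exp (c * φ x) := by
        rw [hEdef]; ring
    _ ≤ G*K*I*D * Real.exp (c * φ x) + (G*M/q * (φ x)^q) * Real.exp (c * φ x) := by
        exact add_le_add_left (le_mul_of_one_le_right hGKID hE1) _
    _ = (G*K*I*D + G*M/q * (φ x)^q) * Real.exp (c * φ x) := by ring
    _ ≤ Real.exp (ε * φ x) * Real.exp (c * φ x) := by
        exact mul_le_mul_of_nonneg_right hexpineq (Real.exp_pos _).le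
    _ = 1 * Real.exp (c' * φ x) := by
        rw [one_mul, ← Real.exp_add]
        congr 1
        rw [hεdef]; ring
end
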